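/- Let $\{a_k\}_{k\ge 0}$ be a sequence of nonnegative reals, $\rho \in (0,1)$, $C \ge 0$, and $D$ a positive integer, satisfying $a_k \le (1-\rho)\max_{1 \le j \le D} a_{\max(k-j,0)} + C$ for all $k \ge 1$. Then $a_k \le \exp(-\rho \lceil k/D \rceil) a_0 + C/\rho$ for all $k \ge 0$. -/

import Mathlib

/-! The bound `B m = (1 - ρ)^m a₀ + C / ρ` is antitone in `m` and satisfies
`(1 - ρ) B m + C = B (m + 1)`, because `C / ρ` is the fixed point of `x ↦ (1 - ρ) x + C`.
Every index `k - j` with `1 ≤ j ≤ D` lies at most one block of length `D` behind `k`, so by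
strong induction `a k ≤ B ⌈k / D⌉`. Finally `1 - ρ ≤ exp (-ρ)`. -/

open Finset

lemma Nat.ceil_div_le_ceil_sub_div_add_one (k : ℕ) {j D : ℕ} (hjD : j ≤ D) :
    ⌈(k : ℝ) / D⌉₊ ≤ ⌈((k - j : ℕ) : ℝ) / D⌉₊ + 1 := by
  have hk : (k : ℝ) ≤ ((k - j : ℕ) : ℝ) + D := by exact_mod_cast (by omega : k ≤ k - j + D)
  calc ⌈(k : ℝ) / D⌉₊ ≤ ⌈((k - j : ℕ) : ℝ) / D + 1⌉₊ := by
        refine Nat.ceil_mono ?_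
        calc (k : ℝ) / D ≤ (((k - j : ℕ) : ℝ) + D) / D := by gcongr
          _ = ((k - j : ℕ) : ℝ) / D + D / D := add_div _ _ _
          _ ≤ ((k - j : ℕ) : ℝ) / D + 1 := by gcongr; exact div_self_le_one _
    _ = ⌈((k - j : ℕ) : ℝ) / D⌉₊ + 1 := Nat.ceil_add_one (by positivity)

lemma le_one_sub_pow_ceil_div_mul_add_div {a : ℕ → ℝ} {ρ C : ℝ} {D : ℕ} (hD : 0 < D)
    (ha₀ : 0 ≤ a 0) (hρ0 : 0 < ρ) (hρ1 : ρ ≤ 1) (hC : 0 ≤ C)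
    (hrec : ∀ k, 1 ≤ k →
      a k ≤ (1 - ρ) * (Icc 1 D).sup' (nonempty_Icc.2 hD) (fun j => a (k - j)) + C) (k : ℕ) :
    a k ≤ (1 - ρ) ^ ⌈(k : ℝ) / D⌉₊ * a 0 + C / ρ := by
  set B : ℕ → ℝ := fun m => (1 - ρ) ^ m * a 0 + C / ρ with hB
  have hB_anti : Antitone B := fun m n hmn =>
    add_le_add_left (mul_le_mul_of_nonneg_right
      (pow_right_anti₀ (by linarith) (by linarith) hmn) ha₀) _
  have hB_succ : ∀ m, (1 - ρ) * B m + C = B (m + 1) := fun m => by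
    simp only [hB]
    field_simp
    ring
  change a k ≤ B ⌈(k : ℝ) / D⌉₊
  induction k using Nat.strong_induction_on with
  | _ k ih =>
    rcases Nat.eq_zero_or_pos k with rfl | hk
    · simp only [hB, CharP.cast_eq_zero, zero_div, Nat.ceil_zero, pow_zero, one_mul]
      exact le_add_of_nonneg_right (div_nonneg hC hρ0.le)
    obtain ⟨n, hn⟩ : ∃ n, ⌈(k : ℝ) / D⌉₊ = n + 1 :=
      Nat.exists_eq_add_one_of_ne_zero (Nat.ceil_pos.2 (by positivity)).ne'
    have hsup : (Icc 1 D).sup' (nonempty_Icc.2 hD) (fun j => a (k - j)) ≤ B n := by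
      refine sup'_le _ _ fun j hj => ?_
      obtain ⟨hj1, hjD⟩ := mem_Icc.mp hj
      refine (ih (k - j) (by omega)).trans (hB_anti ?_)
      have := Nat.ceil_div_le_ceil_sub_div_add_one k hjD
      omega
    calc a k ≤ (1 - ρ) * B n + C := (hrec k hk).trans (by gcongr)
      _ = B ⌈(k : ℝ) / D⌉₊ := by rw [hB_succ, hn]

lemma Real.one_sub_pow_le_exp_neg_mul {ρ : ℝ} (hρ : ρ ≤ 1) (n : ℕ) :
    (1 - ρ) ^ n ≤ Real.exp (-(ρ * n)) := by
  calc (1 - ρ) ^ n ≤ Real.exp (-ρ) ^ n :=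
        pow_le_pow_left₀ (by linarith) (Real.one_sub_le_exp_neg ρ) n
    _ = Real.exp (-(ρ * n)) := by rw [← Real.exp_nat_mul]; ring_nf

theorem stmt_1 (a : ℕ → ℝ) (ρ C : ℝ) (D : ℕ)
    (ha : ∀ k, 0 ≤ a k) (hρ0 : 0 < ρ) (hρ1 : ρ < 1) (hC : 0 ≤ C) (hD : 0 < D)
    (hrec : ∀ k, 1 ≤ k →
      a k ≤ (1 - ρ) * (Finset.Icc 1 D).sup' (Finset.nonempty_Icc.2 hD) (fun j => a (k - j)) + C) :
    ∀ k, a k ≤ Real.exp (-(ρ * (⌈(k : ℝ) / (D : ℝ)⌉₊ : ℝ))) * a 0 + C / ρ := fun k =>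
  (le_one_sub_pow_ceil_div_mul_add_div hD (ha 0) hρ0 hρ1.le hC hrec k).trans <| by
    gcongr
    · exact ha 0
    · exact Real.one_sub_pow_le_exp_neg_mul hρ1.le _
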